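/- Let Δ̃⁺ be the set of positive roots of a polarization of a finite reduced crystallographic root system Δ. Suppose γ₁, …, γ_N ∈ Δ̃⁺ are positive roots (not necessarily distinct) such that α := γ₁ + γ₂ + ⋯ + γ_N ∈ Δ̃⁺. Then for every 1 ≤ k ≤ N there exists a permutation σ of {1, …, N} with σ(1) = k such that the partial sums γ_{σ(1)} + ⋯ + γ_{σ(r)} belong to Δ̃⁺ for all 1 ≤ r ≤ N. -/

import Mathlib

open RealInnerProductSpace

variable {V : Type*} [NormedAddCommGroup V] [InnerProductSpace ℝ V]
  [FiniteDimensional ℝ V]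

/-- A finite reduced crystallographic root system in a real inner product
space: a finite set of nonzero vectors, stable under the reflections `s_α`,
with integral pairings `2(β,α)/(α,α)`, and such that the only scalar multiples
of a root which are roots are `±` that root. -/
structure IsRootSystem (Δ : Set V) : Prop where
  finite : Δ.Finite
  ne_zero : ∀ α ∈ Δ, α ≠ 0
  reflect_mem : ∀ α ∈ Δ, ∀ β ∈ Δ, β - (2 * ⟪β, α⟫ / ⟪α, α⟫) • α ∈ Δ
  crystallographic : ∀ α ∈ Δ, ∀ β ∈ Δ, ∃ n : ℤ, (n : ℝ) = 2 * ⟪β, α⟫ / ⟪α, α⟫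
  reduced : ∀ α ∈ Δ, ∀ t : ℝ, t • α ∈ Δ → t = 1 ∨ t = -1

/-!
Build the ordering greedily, starting from `γ_k`. Let `x` be the current partial sum (a positive
root) and `α = x + S` the total, `S` the sum of the remaining roots. Either some remaining `γ`
has `x + γ` a root (put it next), or some has `α - γ` a root (put it last). Otherwise, since
`a + b` is a root when `⟪a, b⟫ < 0` and `a - b` is one when `⟪a, b⟫ > 0`, every remaining `γ`
has `⟪x, γ⟫ ≥ 0 ≥ ⟪α, γ⟫`; summing gives `‖S‖² = ⟪α, S⟫ - ⟪x, S⟫ ≤ 0`, contradicting `f S > 0`.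
-/

section PartialSumsIn

variable {M : Type*} [AddCommMonoid M]

def PartialSumsIn (Δ : Set M) (x : M) (l : List M) : Prop :=
  ∀ n, x + (l.take n).sum ∈ Δ

namespace PartialSumsIn

variable {Δ : Set M} {x y : M} {l : List M}

lemma nil (hx : x ∈ Δ) : PartialSumsIn Δ x [] := fun _ => by simpa using hx

lemma cons (hx : x ∈ Δ) (h : PartialSumsIn Δ (x + y) l) : PartialSumsIn Δ x (y :: l)
  | 0 => by simpa using hx
  | n + 1 => by simpa [add_assoc] using h n

lemma concat (h : PartialSumsIn Δ x l) (hy : x + (l ++ [y]).sum ∈ Δ) :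
    PartialSumsIn Δ x (l ++ [y]) := fun n => by
  rcases le_or_gt n l.length with hn | hn
  · rw [List.take_append_of_le_length hn]
    exact h n
  · rwa [List.take_of_length_le (by simp; omega)]

end PartialSumsIn

end PartialSumsIn

section

variable {E : Type*} [NormedAddCommGroup E] [InnerProductSpace ℝ E]

lemma real_inner_list_sum (x : E) (l : List E) : ⟪x, l.sum⟫ = (l.map (⟪x, ·⟫)).sum := by
  simpa using map_list_sum (innerₛₗ ℝ x) l

lemma list_sum_eq_zero_of_inner_nonneg_of_inner_add_sum_nonpos {x : E} {l : List E}
    (hx : ∀ y ∈ l, 0 ≤ ⟪x, y⟫) (hxS : ∀ y ∈ l, ⟪x + l.sum, y⟫ ≤ 0) : l.sum = 0 := by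
  have h₁ : 0 ≤ ⟪x, l.sum⟫ := by
    rw [real_inner_list_sum]
    exact List.sum_nonneg (by simpa using hx)
  have h₂ : ⟪x + l.sum, l.sum⟫ ≤ 0 := by
    rw [real_inner_list_sum]
    simpa using List.sum_le_card_nsmul (l.map (⟪x + l.sum, ·⟫)) 0 (by simpa using hxS)
  rw [inner_add_left] at h₂
  exact real_inner_self_nonpos.mp (by linarith)

namespace IsRootSystem

variable {Δ : Set E}

lemma neg_mem (hΔ : IsRootSystem Δ) {x : E} (hx : x ∈ Δ) : -x ∈ Δ := by
  have hxx : ⟪x, x⟫ ≠ 0 := (real_inner_self_pos.mpr (hΔ.ne_zero x hx)).ne'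
  have h := hΔ.reflect_mem x hx x hx
  rwa [mul_div_assoc, div_self hxx, mul_one, two_smul, sub_add_cancel_left] at h

lemma inner_lt_norm_mul_norm (hΔ : IsRootSystem Δ) {x y : E} (hx : x ∈ Δ) (hy : y ∈ Δ)
    (hne : x ≠ y) : ⟪x, y⟫ < ‖x‖ * ‖y‖ := by
  rw [inner_lt_norm_mul_iff_real]
  intro h
  have hx0 : 0 < ‖x‖ := norm_pos_iff.mpr (hΔ.ne_zero x hx)
  have hy0 : 0 < ‖y‖ := norm_pos_iff.mpr (hΔ.ne_zero y hy)
  have hxy : x = (‖x‖ / ‖y‖) • y := by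
    rw [div_eq_inv_mul, mul_smul, ← h, inv_smul_smul₀ hy0.ne']
  rcases hΔ.reduced y hy _ (hxy ▸ hx) with h1 | h1
  · exact hne (by rwa [h1, one_smul] at hxy)
  · have : 0 < ‖x‖ / ‖y‖ := by positivity
    linarith

/-- The two Cartan integers are positive integers whose product is `< 4` by strict
Cauchy–Schwarz. -/
lemma pairing_eq_one_or_pairing_eq_one (hΔ : IsRootSystem Δ) {x y : E} (hx : x ∈ Δ)
    (hy : y ∈ Δ) (hpos : 0 < ⟪x, y⟫) (hne : x ≠ y) :
    2 * ⟪x, y⟫ / ⟪y, y⟫ = 1 ∨ 2 * ⟪y, x⟫ / ⟪x, x⟫ = 1 := by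
  obtain ⟨n, hn⟩ := hΔ.crystallographic y hy x hx
  obtain ⟨m, hm⟩ := hΔ.crystallographic x hx y hy
  have hxx : 0 < ⟪x, x⟫ := real_inner_self_pos.mpr (hΔ.ne_zero x hx)
  have hyy : 0 < ⟪y, y⟫ := real_inner_self_pos.mpr (hΔ.ne_zero y hy)
  have hCS := hΔ.inner_lt_norm_mul_norm hx hy hne
  have hn0 : 0 < n := by
    have : (0 : ℝ) < n := by rw [hn]; positivity
    exact_mod_cast this
  have hm0 : 0 < m := by
    have : (0 : ℝ) < m := by rw [hm, real_inner_comm]; positivity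
    exact_mod_cast this
  have hnm : n * m < 4 := by
    have : (n : ℝ) * m < 4 := by
      rw [hn, hm, div_mul_div_comm, div_lt_iff₀ (mul_pos hyy hxx), real_inner_comm x y,
        real_inner_self_eq_norm_sq, real_inner_self_eq_norm_sq]
      nlinarith
    exact_mod_cast this
  have : n = 1 ∨ m = 1 := by
    by_contra! h
    nlinarith [lt_of_le_of_ne hn0 h.1.symm, lt_of_le_of_ne hm0 h.2.symm]
  rcases this with rfl | rfl
  · exact .inl (by exact_mod_cast hn.symm)
  · exact .inr (by exact_mod_cast hm.symm)

lemma sub_mem_of_inner_pos (hΔ : IsRootSystem Δ) {x y : E} (hx : x ∈ Δ) (hy : y ∈ Δ)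
    (hpos : 0 < ⟪x, y⟫) (hne : x ≠ y) : x - y ∈ Δ := by
  rcases hΔ.pairing_eq_one_or_pairing_eq_one hx hy hpos hne with h | h
  · have h' := hΔ.reflect_mem y hy x hx
    rwa [h, one_smul] at h'
  · have h' := hΔ.neg_mem (hΔ.reflect_mem x hx y hy)
    rwa [h, one_smul, neg_sub] at h'

lemma add_mem_of_inner_neg (hΔ : IsRootSystem Δ) {x y : E} (hx : x ∈ Δ) (hy : y ∈ Δ)
    (hneg : ⟪x, y⟫ < 0) (hne : x ≠ -y) : x + y ∈ Δ := by
  simpa using hΔ.sub_mem_of_inner_pos hx (hΔ.neg_mem hy) (by simpa using hneg) hne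

lemma exists_add_mem_or_add_sum_sub_mem (hΔ : IsRootSystem Δ) (f : E →ₗ[ℝ] ℝ) {x : E}
    (hx : x ∈ Δ) (hfx : 0 < f x) {l : List E} (hl : l ≠ []) (hlΔ : ∀ y ∈ l, y ∈ Δ)
    (hlf : ∀ y ∈ l, 0 < f y) (hsum : x + l.sum ∈ Δ) :
    ∃ y ∈ l, x + y ∈ Δ ∨ x + l.sum - y ∈ Δ := by
  have hle_sum : ∀ y ∈ l, f y ≤ f l.sum := fun y hy => by
    rw [map_list_sum]
    exact List.single_le_sum (by simpa using fun z hz => (hlf z hz).le) _ (List.mem_map_of_mem hy)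
  by_contra! h
  have hx_inner : ∀ y ∈ l, 0 ≤ ⟪x, y⟫ := fun y hy => le_of_not_gt fun hneg => by
    refine (h y hy).1 (hΔ.add_mem_of_inner_neg hx (hlΔ y hy) hneg fun hxy => ?_)
    have := hlf y hy
    simp [hxy] at hfx
    linarith
  have hxS_inner : ∀ y ∈ l, ⟪x + l.sum, y⟫ ≤ 0 := fun y hy => le_of_not_gt fun hpos => by
    refine (h y hy).2 (hΔ.sub_mem_of_inner_pos hsum (hlΔ y hy) hpos fun hxy => ?_)
    have := hle_sum y hy
    rw [← hxy, map_add] at this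
    linarith
  obtain ⟨y, hy⟩ := List.exists_mem_of_ne_nil l hl
  have hS := list_sum_eq_zero_of_inner_nonneg_of_inner_add_sum_nonpos hx_inner hxS_inner
  have := hle_sum y hy
  rw [hS, map_zero] at this
  linarith [hlf y hy]

theorem exists_perm_partialSumsIn (hΔ : IsRootSystem Δ) (f : E →ₗ[ℝ] ℝ) {ι : Type*}
    [DecidableEq ι] (v : ι → E) (hvΔ : ∀ i, v i ∈ Δ) (hvf : ∀ i, 0 < f (v i)) (l : List ι)
    {x : E} (hx : x ∈ Δ) (hfx : 0 < f x) (hsum : x + (l.map v).sum ∈ Δ) :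
    ∃ m : List ι, m.Perm l ∧ PartialSumsIn Δ x (m.map v) := by
  by_cases hl : l = []
  · subst hl
    exact ⟨[], .rfl, .nil hx⟩
  obtain ⟨y, hy, hy'⟩ := hΔ.exists_add_mem_or_add_sum_sub_mem f hx hfx
    (by simpa using hl) (by simpa using fun i _ => hvΔ i) (by simpa using fun i _ => hvf i) hsum
  obtain ⟨i, hi, rfl⟩ := List.mem_map.mp hy
  have hsplit : (l.map v).sum = v i + ((l.erase i).map v).sum := by
    simpa using ((List.perm_cons_erase hi).map v).sum_eq
  rcases hy' with hnext | hlast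
  · obtain ⟨m, hm, hchain⟩ := exists_perm_partialSumsIn hΔ f v hvΔ hvf (l.erase i) hnext
      (by rw [map_add]; linarith [hvf i]) (by rwa [add_assoc, ← hsplit])
    exact ⟨i :: m, (hm.cons i).trans (List.perm_cons_erase hi).symm, hchain.cons hx⟩
  · obtain ⟨m, hm, hchain⟩ := exists_perm_partialSumsIn hΔ f v hvΔ hvf (l.erase i) hx hfx
      (by convert hlast using 1; rw [hsplit]; abel)
    have hperm : (m ++ [i]).Perm l :=
      (List.perm_append_singleton i m).trans ((hm.cons i).trans (List.perm_cons_erase hi).symm)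
    refine ⟨m ++ [i], hperm, ?_⟩
    rw [List.map_append]
    exact hchain.concat (by simpa [← (hperm.map v).sum_eq] using hsum)
termination_by l.length
decreasing_by all_goals exact List.length_erase_of_mem hi ▸ Nat.sub_one_lt (by simpa using hl)

end IsRootSystem

end

lemma exists_perm_ofFn_eq_of_perm_finRange {n : ℕ} {L : List (Fin n)}
    (h : L.Perm (List.finRange n)) : ∃ σ : Equiv.Perm (Fin n), List.ofFn σ = L := by
  have hlen : L.length = n := by simpa using h.length_eq
  let e := (h.nodup_iff.mpr (List.nodup_finRange n)).getEquivOfForallMemList L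
    fun i => h.mem_iff.mpr (List.mem_finRange i)
  refine ⟨(finCongr hlen.symm).trans e, List.ext_getElem (by simp [hlen]) fun i _ _ => ?_⟩
  simp [e]

lemma Fin.sum_filter_le_eq_sum_take_ofFn {M : Type*} [AddCommMonoid M] {n : ℕ} (g : Fin n → M)
    (r : Fin n) : ∑ j ∈ Finset.univ.filter (· ≤ r), g j = ((List.ofFn g).take (r + 1)).sum := by
  rw [List.sum_take_ofFn]
  congr 1
  ext j
  simp only [Finset.mem_filter, Finset.mem_univ, true_and]
  omega

theorem positive_root_sum_reorder_general (Δ : Set V) (hΔ : IsRootSystem Δ)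
    (f : V →ₗ[ℝ] ℝ)
    (P : Set V) (hP : P = {α | α ∈ Δ ∧ 0 < f α})
    {N : ℕ} (hN : 0 < N) (γ : Fin N → V)
    (hγ : ∀ j : Fin N, γ j ∈ P)
    (hα : (∑ j, γ j) ∈ P) (k : Fin N) :
    ∃ σ : Equiv.Perm (Fin N), σ ⟨0, hN⟩ = k ∧
      ∀ r : Fin N,
        (∑ j ∈ Finset.univ.filter (fun j => j ≤ r), γ (σ j)) ∈ P := by
  subst hP
  have hk := List.perm_cons_erase (List.mem_finRange k)
  have hsplit : γ k + (((List.finRange N).erase k).map γ).sum = ∑ j, γ j := by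
    rw [Fin.sum_univ_def, (hk.map γ).sum_eq, List.map_cons, List.sum_cons]
  obtain ⟨m, hm, hchain⟩ := hΔ.exists_perm_partialSumsIn f γ (fun j => (hγ j).1)
    (fun j => (hγ j).2) _ (hγ k).1 (hγ k).2 (hsplit ▸ hα.1)
  obtain ⟨σ, hσ⟩ := exists_perm_ofFn_eq_of_perm_finRange ((hm.cons k).trans hk.symm)
  refine ⟨σ, ?_, fun r => ⟨?_, ?_⟩⟩
  · have h0 : (List.ofFn σ)[0]'(by simpa using hN) = σ ⟨0, hN⟩ := List.getElem_ofFn _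
    simpa [hσ] using h0.symm
  · rw [Fin.sum_filter_le_eq_sum_take_ofFn, ← Function.comp_def, ← List.map_ofFn, hσ]
    simpa using hchain r
  · rw [map_sum]
    exact Finset.sum_pos (fun j _ => (hγ (σ j)).2) ⟨r, by simp⟩

/-- Let `Δ̃⁺` be the positive roots of a polarization (given by a linear
functional `f` nonvanishing on roots) of a finite reduced crystallographic root
system `Δ`.  If `γ₁,…,γ_N ∈ Δ̃⁺` (not necessarily distinct) are such that
`α = γ₁ + ⋯ + γ_N ∈ Δ̃⁺`, then for every `1 ≤ k ≤ N` there is a permutation `σ`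
of `{1,…,N}` with `σ(1) = k` such that all partial sums
`γ_{σ(1)} + ⋯ + γ_{σ(r)}` lie in `Δ̃⁺`. -/
theorem positive_root_sum_reorder (Δ : Set V) (hΔ : IsRootSystem Δ)
    (f : V →ₗ[ℝ] ℝ) (hf : ∀ α ∈ Δ, f α ≠ 0)
    (P : Set V) (hP : P = {α | α ∈ Δ ∧ 0 < f α})
    {N : ℕ} (hN : 0 < N) (γ : Fin N → V)
    (hγ : ∀ j : Fin N, γ j ∈ P)
    (hα : (∑ j, γ j) ∈ P) (k : Fin N) :
    ∃ σ : Equiv.Perm (Fin N), σ ⟨0, hN⟩ = k ∧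
      ∀ r : Fin N,
        (∑ j ∈ Finset.univ.filter (fun j => j ≤ r), γ (σ j)) ∈ P :=
  positive_root_sum_reorder_general Δ hΔ f P hP hN γ hγ hα k
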